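/- arXiv:cs/0009006 — 3 statements merged into one kernel-verified Lean document; each statement's English description precedes it below -/
import Mathlib

section
/- There exists ε ∈ (0, 1) such that λ(3−ε, 4−ε, 4−ε) = λ(1+ε, 4), and for this ε both are equal to λ(4,4,5,5). Moreover ε ≈ 0.095543, i.e., ε ∈ (0.0955, 0.0956). -/
/-!
Let `λ ≈ 1.3644301` be the root of `x⁵ = 2x + 2`, i.e. `λ = λ(4,4,5,5)`, and choose `ε`
with `λ^ε = λ⁴ / (λ + 2)`. Then
`λ^{-(3-ε)} + 2 λ^{-(4-ε)} = λ^ε (λ + 2) / λ⁴ = 1`, and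
`λ^{-(1+ε)} + λ^{-4} = (λ + 2) / λ⁵ + λ / λ⁵ = (2λ + 2) / λ⁵ = 1`.
The bounds `15/157 < ε < 13/136` become the integer-power inequalities
`λ^15 (λ + 2)^157 < (λ⁴)^157` and `(λ⁴)^136 < λ^13 (λ + 2)^136`, checked at the ends
of a short interval enclosing `λ`.
-/

open Real Set

namespace Real

variable {b y : ℝ} {m n : ℕ}

lemma div_lt_logb_iff_pow_lt_pow (hb : 1 < b) (hy : 0 < y) (hn : 0 < n) :
    m / n < logb b y ↔ b ^ m < y ^ n := by
  have hbm : logb b (b ^ m) = m := by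
    rw [logb_pow, logb_self_eq_one hb, mul_one]
  rw [div_lt_iff₀ (by positivity), mul_comm, ← hbm, ← logb_pow,
    logb_lt_logb_iff hb (by positivity) (by positivity)]

lemma logb_lt_div_iff_pow_lt_pow (hb : 1 < b) (hy : 0 < y) (hn : 0 < n) :
    logb b y < m / n ↔ y ^ n < b ^ m := by
  have hbm : logb b (b ^ m) = m := by
    rw [logb_pow, logb_self_eq_one hb, mul_one]
  rw [lt_div_iff₀ (by positivity), mul_comm, ← hbm, ← logb_pow,
    logb_lt_logb_iff hb (by positivity) (by positivity)]

end Real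

lemma exists_quintic_root_mem_Icc :
    ∃ lam ∈ Icc (1.3644301 : ℝ) 1.3644302, lam ^ 5 = 2 * lam + 2 := by
  have hcont : ContinuousOn (fun x : ℝ => x ^ 5 - 2 * x - 2) (Icc 1.3644301 1.3644302) := by
    fun_prop
  obtain ⟨lam, hmem, hroot⟩ := intermediate_value_Icc (by norm_num) hcont
    (show (0 : ℝ) ∈ Icc _ _ by constructor <;> norm_num)
  exact ⟨lam, hmem, by linarith [hroot]⟩

section WorkFactors

variable {lam ε : ℝ}

lemma rpow_neg_three_sub_add_two_rpow_neg_four_sub (hlam : 0 < lam)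
    (hε : lam ^ ε = lam ^ 4 / (lam + 2)) :
    lam ^ (-(3 - ε)) + lam ^ (-(4 - ε)) + lam ^ (-(4 - ε)) = 1 := by
  have h3 : lam ^ (-(3 - ε)) = lam ^ ε / lam ^ 3 := by
    rw [show -(3 - ε) = ε - (3 : ℕ) by push_cast; ring, rpow_sub hlam, rpow_natCast]
  have h4 : lam ^ (-(4 - ε)) = lam ^ ε / lam ^ 4 := by
    rw [show -(4 - ε) = ε - (4 : ℕ) by push_cast; ring, rpow_sub hlam, rpow_natCast]
  have hlam2 : lam + 2 ≠ 0 := by positivity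
  rw [h3, h4, hε]
  field_simp
  ring

lemma rpow_neg_one_add_add_rpow_neg_four (hlam : 0 < lam)
    (hε : lam ^ ε = lam ^ 4 / (lam + 2)) (hroot : lam ^ 5 = 2 * lam + 2) :
    lam ^ (-(1 + ε)) + lam ^ (-(4 : ℝ)) = 1 := by
  have h1 : lam ^ (-(1 + ε)) = (lam * lam ^ ε)⁻¹ := by
    rw [rpow_neg hlam.le, rpow_add hlam, rpow_one]
  have h4 : lam ^ (-(4 : ℝ)) = (lam ^ 4)⁻¹ := by
    rw [rpow_neg hlam.le, show (4 : ℝ) = (4 : ℕ) by norm_num, rpow_natCast]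
  have hlam2 : lam + 2 ≠ 0 := by positivity
  rw [h1, h4, hε]
  field_simp
  linear_combination -hroot

lemma two_div_pow_four_add_two_div_pow_five (hlam : lam ≠ 0) (hroot : lam ^ 5 = 2 * lam + 2) :
    2 / lam ^ 4 + 2 / lam ^ 5 = 1 := by
  field_simp
  linear_combination -hroot

end WorkFactors

/-- There is `ε ∈ (0,1)`, in fact `ε ∈ (0.0955, 0.0956)`, for which the work factors
`λ(3−ε, 4−ε, 4−ε)` and `λ(1+ε, 4)` coincide and are both equal to `λ(4,4,5,5)`:
i.e. there is a common root `lam > 1` of all three defining equations. -/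
theorem optimal_epsilon :
    ∃ ε : ℝ, 0 < ε ∧ ε < 1 ∧ 0.0955 < ε ∧ ε < 0.0956 ∧
      ∃ lam : ℝ, 1 < lam ∧
        lam ^ (-(3 - ε)) + lam ^ (-(4 - ε)) + lam ^ (-(4 - ε)) = 1 ∧
        lam ^ (-(1 + ε)) + lam ^ (-(4 : ℝ)) = 1 ∧
        2 / lam ^ 4 + 2 / lam ^ 5 = 1 := by
  obtain ⟨lam, ⟨hlo, hhi⟩, hroot⟩ := exists_quintic_root_mem_Icc
  have hlam : 1 < lam := by linarith
  have hpos : 0 < lam := by linarith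
  have hlam2 : 0 < lam + 2 := by linarith
  have hy : 0 < lam ^ 4 / (lam + 2) := by positivity
  set ε := logb lam (lam ^ 4 / (lam + 2))
  have hε : lam ^ ε = lam ^ 4 / (lam + 2) := rpow_logb hpos hlam.ne' hy
  have hε_lo : ((15 : ℕ) : ℝ) / (157 : ℕ) < ε := by
    rw [div_lt_logb_iff_pow_lt_pow hlam hy (by norm_num), div_pow, lt_div_iff₀ (by positivity)]
    calc lam ^ 15 * (lam + 2) ^ 157 ≤ 1.3644302 ^ 15 * (1.3644302 + 2) ^ 157 := by gcongr
      _ < ((1.3644301 : ℝ) ^ 4) ^ 157 := by norm_num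
      _ ≤ (lam ^ 4) ^ 157 := by gcongr
  have hε_hi : ε < ((13 : ℕ) : ℝ) / (136 : ℕ) := by
    rw [logb_lt_div_iff_pow_lt_pow hlam hy (by norm_num), div_pow, div_lt_iff₀ (by positivity)]
    calc (lam ^ 4) ^ 136 ≤ ((1.3644302 : ℝ) ^ 4) ^ 136 := by gcongr
      _ < 1.3644301 ^ 13 * (1.3644301 + 2) ^ 136 := by norm_num
      _ ≤ lam ^ 13 * (lam + 2) ^ 136 := by gcongr
  norm_num at hε_lo hε_hi
  refine ⟨ε, by linarith, by linarith, by linarith, by linarith, lam, hlam,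
    rpow_neg_three_sub_add_two_rpow_neg_four_sub hpos hε,
    rpow_neg_one_add_add_rpow_neg_four hpos hε hroot,
    two_div_pow_four_add_two_div_pow_five hpos.ne' hroot⟩
end

section
/- A graph G is 3-vertex-colorable if and only if there is a maximal independent set S of G such that G − S is bipartite. -/
def IndepSet {V : Type*} (G : SimpleGraph V) (S : Set V) : Prop :=
  ∀ u ∈ S, ∀ v ∈ S, ¬ G.Adj u v

def MaximalIndepSet {V : Type*} (G : SimpleGraph V) (S : Set V) : Prop :=
  IndepSet G S ∧ ∀ T : Set V, IndepSet G T → S ⊆ T → S = T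

/-!
A color class of a proper `k`-coloring is independent, so by Zorn's lemma it extends to a
maximal independent set `S`; every vertex outside `S` lies outside that class, hence the
remaining `k - 1` colors properly color `G − S`. Conversely, a `(k - 1)`-coloring of `G − S`
for an independent `S` extends to a `k`-coloring of `G` by giving all of `S` one new color.
-/

namespace SimpleGraph

variable {V : Type*} {G : SimpleGraph V} {S : Set V}

theorem indepSet_iff_isIndepSet : IndepSet G S ↔ G.IsIndepSet S :=
  ⟨fun h _ hu _ hv _ => h _ hu _ hv, fun h _ hu _ hv huv => h hu hv huv.ne huv⟩

theorem maximalIndepSet_iff_maximal : MaximalIndepSet G S ↔ Maximal G.IsIndepSet S := by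
  simp only [MaximalIndepSet, Maximal, indepSet_iff_isIndepSet]
  refine and_congr_right fun _ => forall_congr' fun T => forall_congr' fun _ => ?_
  exact ⟨fun h hST => (h hST).ge, fun h hST => hST.antisymm (h hST)⟩

theorem IsIndepSet.exists_maximal_superset (hS : G.IsIndepSet S) :
    ∃ T, S ⊆ T ∧ Maximal G.IsIndepSet T :=
  zorn_subset_nonempty {T | G.IsIndepSet T}
    (fun c hc hchain _ => ⟨⋃₀ c, hchain.pairwise_sUnion.2 hc, fun _ => Set.subset_sUnion_of_mem⟩)
    S hS

theorem Coloring.colorable_induce_compl_of_colorClass_subset {α : Type*} [Fintype α]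
    [DecidableEq α] (C : G.Coloring α) {a : α} (haS : C.colorClass a ⊆ S) :
    (G.induce Sᶜ).Colorable (Fintype.card α - 1) := by
  let C' : (G.induce Sᶜ).Coloring {b // b ≠ a} :=
    Coloring.mk (fun v => ⟨C v, fun hv => v.2 (haS hv)⟩)
      fun huv => Subtype.coe_ne_coe.1 (C.valid huv)
  simpa using C'.colorable

theorem IsIndepSet.colorable_succ {n : ℕ} (hS : G.IsIndepSet S)
    (hcompl : (G.induce Sᶜ).Colorable n) : G.Colorable (n + 1) := by
  classical
  obtain ⟨c⟩ := hcompl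
  let C : G.Coloring (Option (Fin n)) :=
    Coloring.mk (fun v => if hv : v ∈ S then none else some (c ⟨v, hv⟩)) fun {u v} huv => by
      by_cases hu : u ∈ S <;> by_cases hv : v ∈ S
      · exact absurd huv (hS hu hv huv.ne)
      · simp [hu, hv]
      · simp [hu, hv]
      · simpa [hu, hv] using c.valid (show (G.induce Sᶜ).Adj ⟨u, hu⟩ ⟨v, hv⟩ from huv)
  simpa using C.colorable

end SimpleGraph

/-- Lawler's observation: a graph is 3-vertex-colorable iff some maximal
independent set `S` has bipartite complement `G − S`. -/
theorem three_colorable_iff_maximal_indep_bipartite {V : Type*}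
    (G : SimpleGraph V) :
    G.Colorable 3 ↔
      ∃ S : Set V, MaximalIndepSet G S ∧ (G.induce Sᶜ).Colorable 2 := by
  simp only [SimpleGraph.maximalIndepSet_iff_maximal]
  constructor
  · rintro ⟨C⟩
    obtain ⟨S, hCS, hS⟩ := (C.isIndepSet_colorClass 0).exists_maximal_superset
    exact ⟨S, hS, by simpa using C.colorable_induce_compl_of_colorClass_subset hCS⟩
  · rintro ⟨S, hS, hbip⟩
    exact hS.prop.colorable_succ hbip
end

section
/- Subject to the constraints p,q,r,s,t ≥ 0, p+q+r+s+t = n, 4p+2q ≤ r, s ≤ 2r, and s+t ≤ 20r/3, the function 3^p · 2^q · Λ^s · (3Λ^3)^{t/7}, where Λ = λ(4,4,5,5) ≈ 1.36443, is maximized at p = 0, r = 2q, s = 2r, t = 14r/3, giving value (2^{3/49} · 3^{4/49} · Λ^{24/49})^n ≈ 1.3289^n. In particular the maximum is at most 1.3289^n. -/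
/-!
Taking logarithms turns the objective into the linear form
`p log 3 + q log 2 + s log Λ + (t/7) (log 3 + 3 log Λ)`, so the bound is weak LP duality,
with explicit dual multipliers for `p ≥ 0` and for the three constraints. Their
nonnegativity comes down to the numerical facts `3 ≤ Λ⁴`, `2Λ ≤ 3` and `3⁵³ Λ²⁴ ≤ 2⁹⁵`, all read
off from `1.3644 < Λ < 1.3645`. At the stated point every multiplied slack vanishes, so the
bound is attained.
-/

open Real

lemma lp_bound {a b c p q r s t : ℝ} (h4c : a ≤ 4 * c) (hbc : b + c ≤ a)
    (h95 : 53 * a + 24 * c ≤ 95 * b) (hp : 0 ≤ p) (hpqr : 4 * p + 2 * q ≤ r)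
    (hrs : s ≤ 2 * r) (hrst : s + t ≤ 20 * r / 3) :
    a * p + b * q + c * s + (a + 3 * c) * (t / 7) ≤
      (3 * b + 4 * a + 24 * c) / 49 * (p + q + r + s + t) := by
  have h46 : 0 ≤ 46 * b - 4 * a - 24 * c := by linarith
  linear_combination (1 / 49) * mul_le_mul_of_nonneg_right h95 hp
    + (1 / 98) * mul_le_mul_of_nonneg_left hpqr h46
    + (1 / 7) * mul_le_mul_of_nonneg_left hrs (sub_nonneg.2 h4c)
    + (3 / 49) * mul_le_mul_of_nonneg_left hrst (by linarith : 0 ≤ a - b - c)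

section Lambda

variable {Λ : ℝ}

lemma pow_five_eq_of_root (hΛ : 0 < Λ) (h : 2 / Λ ^ 4 + 2 / Λ ^ 5 = 1) :
    Λ ^ 5 = 2 * Λ + 2 := by
  field_simp at h
  linarith

lemma mem_Ioo_of_pow_five_eq (hΛ : 1 < Λ) (h : Λ ^ 5 = 2 * Λ + 2) :
    Λ ∈ Set.Ioo 1.3644 1.3645 :=
  ⟨by nlinarith [sq_nonneg (Λ ^ 2 - 1.3644 ^ 2), sq_nonneg (Λ - 1.3644)],
    by nlinarith [sq_nonneg (Λ ^ 2 - 1.3645 ^ 2), sq_nonneg (Λ - 1.3645)]⟩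

lemma log_three_le_four_mul_log (h : 1.3644 < Λ) : log 3 ≤ 4 * log Λ := by
  have : (3 : ℝ) ≤ Λ ^ 4 := by
    nlinarith [sq_nonneg (Λ ^ 2 - 1.3644 ^ 2), sq_nonneg (Λ - 1.3644)]
  simpa using log_le_log (by norm_num) this

lemma log_two_add_log_le_log_three (h0 : 0 < Λ) (h : Λ < 1.3645) :
    log 2 + log Λ ≤ log 3 := by
  rw [← log_mul two_ne_zero h0.ne']
  exact log_le_log (by positivity) (by linarith)

lemma fiftythree_mul_log_three_add_le_log_two (h0 : 0 < Λ) (h : Λ < 1.3645) :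
    53 * log 3 + 24 * log Λ ≤ 95 * log 2 := by
  have : (3 : ℝ) ^ 53 * Λ ^ 24 ≤ 2 ^ 95 := calc
    (3 : ℝ) ^ 53 * Λ ^ 24 ≤ 3 ^ 53 * 1.3645 ^ 24 := by gcongr
    _ ≤ 2 ^ 95 := by norm_num
  simpa [log_mul, h0.ne'] using log_le_log (by positivity) this

lemma objective_eq_exp (hΛ : 0 < Λ) (p q s t : ℝ) :
    (3 : ℝ) ^ p * 2 ^ q * Λ ^ s * (3 * Λ ^ 3) ^ (t / 7) =
      exp (log 3 * p + log 2 * q + log Λ * s + (log 3 + 3 * log Λ) * (t / 7)) := by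
  have h3Λ : log (3 * Λ ^ 3) = log 3 + 3 * log Λ := by
    rw [log_mul three_ne_zero (by positivity), log_pow]; push_cast; ring
  rw [rpow_def_of_pos three_pos, rpow_def_of_pos two_pos, rpow_def_of_pos hΛ,
    rpow_def_of_pos (by positivity), h3Λ, exp_add, exp_add, exp_add]

lemma log_base (hΛ : 0 < Λ) :
    log ((2 : ℝ) ^ ((3 : ℝ) / 49) * 3 ^ ((4 : ℝ) / 49) * Λ ^ ((24 : ℝ) / 49)) =
      (3 * log 2 + 4 * log 3 + 24 * log Λ) / 49 := by
  rw [log_mul (by positivity) (by positivity), log_mul (by positivity) (by positivity),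
    log_rpow two_pos, log_rpow three_pos, log_rpow hΛ]
  ring

lemma base_le (h0 : 0 < Λ) (h : Λ < 1.3645) :
    (2 : ℝ) ^ ((3 : ℝ) / 49) * 3 ^ ((4 : ℝ) / 49) * Λ ^ ((24 : ℝ) / 49) ≤ 1.3289 := by
  have : (2 : ℝ) ^ 3 * 3 ^ 4 * Λ ^ 24 ≤ 1.3289 ^ 49 := calc
    (2 : ℝ) ^ 3 * 3 ^ 4 * Λ ^ 24 ≤ 2 ^ 3 * 3 ^ 4 * 1.3645 ^ 24 := by gcongr
    _ ≤ 1.3289 ^ 49 := by norm_num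
  have hlog : 3 * log 2 + 4 * log 3 + 24 * log Λ ≤ 49 * log 1.3289 := by
    simpa [log_mul, h0.ne'] using log_le_log (by positivity) this
  rw [← log_le_log_iff (by positivity) (by norm_num), log_base h0]
  linarith

end Lambda

/-- The optimization concluding the 3-coloring bound.  Let `Λ = λ(4,4,5,5)` (the
root in `(1,∞)` of `1 = 2x⁻⁴ + 2x⁻⁵`, so `1.3644 < Λ < 1.3645`).  Subject to
`p,q,r,s,t ≥ 0`, `p+q+r+s+t = n`, `4p+2q ≤ r`, `s ≤ 2r`, `s+t ≤ 20r/3`, the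
quantity `3^p·2^q·Λ^s·(3Λ³)^(t/7)` is at most
`(2^(3/49)·3^(4/49)·Λ^(24/49))^n ≤ 1.3289^n`, and this bound is attained at
`p = 0`, `r = 2q`, `s = 2r`, `t = 14r/3`. -/
theorem coloring_lp_bound (Λ : ℝ) (hΛ1 : 1 < Λ)
    (hΛroot : 2 / Λ ^ 4 + 2 / Λ ^ 5 = 1) (n : ℝ) (hn : 0 ≤ n) :
    (∀ p q r s t : ℝ, 0 ≤ p → 0 ≤ q → 0 ≤ r → 0 ≤ s → 0 ≤ t →
      p + q + r + s + t = n → 4 * p + 2 * q ≤ r → s ≤ 2 * r →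
      s + t ≤ 20 * r / 3 →
      (3 : ℝ) ^ p * 2 ^ q * Λ ^ s * (3 * Λ ^ 3) ^ (t / 7) ≤
        ((2 : ℝ) ^ ((3 : ℝ) / 49) * 3 ^ ((4 : ℝ) / 49) *
          Λ ^ ((24 : ℝ) / 49)) ^ n) ∧
    (∃ p q r s t : ℝ, 0 ≤ p ∧ 0 ≤ q ∧ 0 ≤ r ∧ 0 ≤ s ∧ 0 ≤ t ∧
      p + q + r + s + t = n ∧ 4 * p + 2 * q ≤ r ∧ s ≤ 2 * r ∧
      s + t ≤ 20 * r / 3 ∧ p = 0 ∧ r = 2 * q ∧ s = 2 * r ∧ t = 14 * r / 3 ∧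
      (3 : ℝ) ^ p * 2 ^ q * Λ ^ s * (3 * Λ ^ 3) ^ (t / 7) =
        ((2 : ℝ) ^ ((3 : ℝ) / 49) * 3 ^ ((4 : ℝ) / 49) *
          Λ ^ ((24 : ℝ) / 49)) ^ n) ∧
    ((2 : ℝ) ^ ((3 : ℝ) / 49) * 3 ^ ((4 : ℝ) / 49) * Λ ^ ((24 : ℝ) / 49)) ^ n ≤
      (1.3289 : ℝ) ^ n := by
  have hΛ0 : 0 < Λ := zero_lt_one.trans hΛ1
  obtain ⟨hlo, hhi⟩ := mem_Ioo_of_pow_five_eq hΛ1 (pow_five_eq_of_root hΛ0 hΛroot)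
  have hB : 0 < (2 : ℝ) ^ ((3 : ℝ) / 49) * 3 ^ ((4 : ℝ) / 49) * Λ ^ ((24 : ℝ) / 49) := by
    positivity
  refine ⟨fun p q r s t hp _ _ _ _ hsum hpqr hrs hrst => ?_,
    ⟨0, 3 * n / 49, 6 * n / 49, 12 * n / 49, 28 * n / 49, le_rfl, by positivity,
      by positivity, by positivity, by positivity, by ring, by linarith, by linarith,
      by linarith, rfl, by ring, by ring, by ring, ?_⟩, ?_⟩
  · rw [objective_eq_exp hΛ0, rpow_def_of_pos hB, log_base hΛ0, exp_le_exp, ← hsum]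
    exact lp_bound (log_three_le_four_mul_log hlo) (log_two_add_log_le_log_three hΛ0 hhi)
      (fiftythree_mul_log_three_add_le_log_two hΛ0 hhi) hp hpqr hrs hrst
  · rw [objective_eq_exp hΛ0, rpow_def_of_pos hB, log_base hΛ0]
    congr 1
    ring
  · exact rpow_le_rpow hB.le (base_le hΛ0 hhi) hn
end
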